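/- Let Φ : A → E{τ} be a Drinfeld A-module over an A-field E, with A = F_q[T]. There exists a positive integer r such that for all nonzero a ∈ A, deg_τ(Φ_a) = r · deg(a). -/
import Mathlib


/-- A Drinfeld `F_q[T]`-module over an `A`-field `E` (with structure morphism
`γ : A →+* E`), realized concretely through the identification of the Ore (twisted
polynomial) ring `E{τ}` with the ring of `F_q`-linear additive polynomials over `E`
under composition: `toFun a` is the additive polynomial through which `a ∈ A = F_q[T]`
acts, ring multiplication in `E{τ}` corresponding to composition of polynomials.
The conditions say: `Φ` is an `F_q`-algebra homomorphism `A → E{τ}`, `D ∘ Φ = γ`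
(the `τ⁰`-coefficient, i.e. the linear coefficient of the additive polynomial, is `γ a`),
and `Φ ≠ γ·τ⁰`. -/
structure DrinfeldModule (Fq : Type*) [Field Fq] [Fintype Fq]
    (E : Type*) [Field E] (γ : Polynomial Fq →+* E) where
  toFun : Polynomial Fq → Polynomial E
  map_one' : toFun 1 = Polynomial.X
  map_add' : ∀ a b, toFun (a + b) = toFun a + toFun b
  map_mul' : ∀ a b, toFun (a * b) = (toFun a).comp (toFun b)
  smul' : ∀ s : Fq, toFun (Polynomial.C s) = Polynomial.C (γ (Polynomial.C s)) * Polynomial.X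
  additive' : ∀ a k, (toFun a).coeff k ≠ 0 → ∃ i : ℕ, k = Fintype.card Fq ^ i
  lin' : ∀ a, (toFun a).coeff 1 = γ a
  nontrivial' : ∃ a, toFun a ≠ Polynomial.C (γ a) * Polynomial.X

open Polynomial

namespace DrinfeldModuleAux

variable {Fq : Type*} [Field Fq] [Fintype Fq]
    {E : Type*} [Field E] {γ : Polynomial Fq →+* E} (φ : DrinfeldModule Fq E γ)

lemma map_zero : φ.toFun 0 = 0 := by
  have := φ.map_add' 0 0
  simpa using this.symm

lemma coeff_zero (a : Polynomial Fq) : (φ.toFun a).coeff 0 = 0 := by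
  by_contra h
  obtain ⟨i, hi⟩ := φ.additive' a 0 h
  have : 0 < Fintype.card Fq ^ i := pow_pos Fintype.card_pos i
  omega

omit [Fintype Fq] in
lemma gamma_C_ne_zero {c : Fq} (hc : c ≠ 0) : γ (C c) ≠ 0 := by
  intro h
  have : γ (C c) * γ (C c⁻¹) = 1 := by
    rw [← map_mul, ← C_mul, mul_inv_cancel₀ hc, map_one, map_one]
  rw [h, zero_mul] at this
  exact zero_ne_one this

/-- If `Φ_T` is linear then all `Φ_a` are linear. -/
lemma all_linear (h : (φ.toFun X).natDegree ≤ 1) :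
    ∀ a, φ.toFun a = C (γ a) * X := by
  have hX : φ.toFun X = C (γ X) * X := by
    have := eq_X_add_C_of_natDegree_le_one h
    rw [coeff_zero φ X, φ.lin' X] at this
    simpa using this
  have hXpow : ∀ n : ℕ, φ.toFun (X ^ n) = C ((γ X) ^ n) * X := by
    intro n
    induction n with
    | zero => simpa using φ.map_one'
    | succ n ih =>
      rw [pow_succ, mul_comm, φ.map_mul' X (X ^ n), ih, hX, mul_comp, C_comp, X_comp,
        ← mul_assoc, ← C_mul, ← pow_succ']
  intro a
  induction a using Polynomial.induction_on' with
  | add p q hp hq => rw [φ.map_add' p q, hp, hq, map_add, C_add, add_mul]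
  | monomial n c =>
    rw [← C_mul_X_pow_eq_monomial, φ.map_mul' (C c) (X ^ n), φ.smul' c, hXpow]
    simp only [mul_comp, C_comp, X_comp]
    rw [← mul_assoc, ← C_mul, ← map_pow, ← map_mul]

lemma degree_Xpow (n : ℕ) :
    (φ.toFun (X ^ n)).natDegree = (φ.toFun X).natDegree ^ n := by
  induction n with
  | zero => simp [φ.map_one']
  | succ n ih =>
    rw [pow_succ, mul_comm, φ.map_mul' X (X ^ n), natDegree_comp, ih, pow_succ,
      mul_comm]

lemma degree_monomial {c : Fq} (hc : c ≠ 0) (n : ℕ) :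
    (φ.toFun (C c * X ^ n)).natDegree = (φ.toFun X).natDegree ^ n := by
  rw [φ.map_mul' (C c) (X ^ n), φ.smul' c]
  simp only [mul_comp, C_comp, X_comp]
  rw [natDegree_C_mul (gamma_C_ne_zero hc), degree_Xpow]

lemma degree_eq (hd : 2 ≤ (φ.toFun X).natDegree) :
    ∀ a : Polynomial Fq, a ≠ 0 →
      (φ.toFun a).natDegree = (φ.toFun X).natDegree ^ a.natDegree := by
  suffices H : ∀ n : ℕ, ∀ a : Polynomial Fq, a ≠ 0 → a.natDegree = n →
      (φ.toFun a).natDegree = (φ.toFun X).natDegree ^ a.natDegree by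
    intro a ha; exact H a.natDegree a ha rfl
  intro n
  induction n using Nat.strong_induction_on with
  | _ n ih =>
    intro a ha hn
    -- write a = eraseLead + leading monomial
    have hsplit := a.eraseLead_add_C_mul_X_pow
    have hlead : (φ.toFun (C a.leadingCoeff * X ^ a.natDegree)).natDegree
        = (φ.toFun X).natDegree ^ a.natDegree :=
      degree_monomial φ (leadingCoeff_ne_zero.mpr ha) _
    by_cases he : a.eraseLead = 0
    · conv_lhs => rw [← hsplit, he, zero_add]
      exact hlead
    · have hlt : a.eraseLead.natDegree < a.natDegree :=
        a.eraseLead_natDegree_lt_or_eraseLead_eq_zero.resolve_right he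
      have hdeg_e : (φ.toFun a.eraseLead).natDegree
          = (φ.toFun X).natDegree ^ a.eraseLead.natDegree :=
        ih a.eraseLead.natDegree (hn ▸ hlt) a.eraseLead he rfl
      have hlt2 : (φ.toFun a.eraseLead).natDegree
          < (φ.toFun (C a.leadingCoeff * X ^ a.natDegree)).natDegree := by
        rw [hdeg_e, hlead]
        exact Nat.pow_lt_pow_right (by omega) hlt
      calc (φ.toFun a).natDegree
          = (φ.toFun (a.eraseLead + C a.leadingCoeff * X ^ a.natDegree)).natDegree := by
            rw [hsplit]
        _ = (φ.toFun a.eraseLead + φ.toFun (C a.leadingCoeff * X ^ a.natDegree)).natDegree := by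
            rw [φ.map_add']
        _ = (φ.toFun (C a.leadingCoeff * X ^ a.natDegree)).natDegree :=
            natDegree_add_eq_right_of_natDegree_lt hlt2
        _ = (φ.toFun X).natDegree ^ a.natDegree := hlead

end DrinfeldModuleAux

/-- For a Drinfeld `A`-module `Φ` over an `A`-field `E` (`A = F_q[T]`) there is a
positive integer `r` — the rank — with `deg_τ (Φ_a) = r·deg a` for all nonzero `a ∈ A`;
in terms of the associated additive polynomials, `deg (Φ_a) = q^(r·deg a)`. -/
theorem drinfeldModule_rank (Fq : Type*) [Field Fq] [Fintype Fq]
    (E : Type*) [Field E] (γ : Polynomial Fq →+* E)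
    (φ : DrinfeldModule Fq E γ) :
    ∃ r : ℕ, 0 < r ∧ ∀ a : Polynomial Fq, a ≠ 0 →
      (φ.toFun a).natDegree = Fintype.card Fq ^ (r * a.natDegree) := by
  classical
  set d := (φ.toFun Polynomial.X).natDegree with hd
  have hq : 2 ≤ Fintype.card Fq := Fintype.one_lt_card
  have hd2 : 2 ≤ d := by
    by_contra h
    have h1 : d ≤ 1 := by omega
    obtain ⟨a, ha⟩ := φ.nontrivial'
    exact ha (DrinfeldModuleAux.all_linear φ h1 a)
  have hne : φ.toFun Polynomial.X ≠ 0 := by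
    intro h
    rw [h] at hd
    simp at hd
    omega
  obtain ⟨s, hs⟩ := φ.additive' Polynomial.X d
    (by rw [hd]; exact Polynomial.leadingCoeff_ne_zero.mpr hne)
  have hs1 : 0 < s := by
    rcases Nat.eq_zero_or_pos s with h | h
    · rw [h, pow_zero] at hs; omega
    · exact h
  refine ⟨s, hs1, fun a ha => ?_⟩
  rw [DrinfeldModuleAux.degree_eq φ hd2 a ha, ← hd, hs, ← pow_mul]
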